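/- arXiv:1807.00538 — 2 statements merged into one kernel-verified Lean document; each statement's English description precedes it below -/
import Mathlib

section
/- For the Coulomb potential in $\mathbb{R}^3$, the Fefferman–de la Llave formula holds: $\frac{1}{|x|} = \frac{1}{\pi}\int_0^\infty \frac{1}{r^5}(\mathbf{1}_{B_r}*\mathbf{1}_{B_r})(x)\,dr$ for all $x\in\mathbb{R}^3\setminus\{0\}$, where $\mathbf{1}_{B_r}$ is the indicator function of the ball of radius $r$ centered at the origin. -/
/-!
The convolution `(1_{B_r} * 1_{B_r})(x)` is the volume of the lens `B(x, r) ∩ B(0, r)`. A reflection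
fixing `0` maps `x` to `d e₀` with `d = ‖x‖`, so the lens volume depends only on `d`. Slicing
perpendicular to `e₀` gives discs of area `π (r² - max ((t - d)², t²))`, and integrating in `t`
yields `π (2r - d)² (4r + d) / 12` for `d < 2r`; for `2r ≤ d` the balls are disjoint. Finally
`∫_{d/2}^∞ r⁻⁵ π (2r - d)² (4r + d) / 12 dr = π / d`.
-/

open MeasureTheory Set Real Metric

theorem integral_indicator_ball_sub_mul_indicator_ball {E : Type*} [SeminormedAddCommGroup E]
    [MeasurableSpace E] [OpensMeasurableSpace E] (μ : Measure E) (x : E) (r : ℝ) :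
    ∫ y, (ball (0 : E) r).indicator (fun _ => (1 : ℝ)) (x - y) *
        (ball (0 : E) r).indicator (fun _ => (1 : ℝ)) y ∂μ =
      μ.real (ball x r ∩ ball 0 r) := by
  have h (y : E) : (ball (0 : E) r).indicator (fun _ => (1 : ℝ)) (x - y) *
      (ball (0 : E) r).indicator (fun _ => (1 : ℝ)) y = (ball x r ∩ ball 0 r).indicator 1 y := by
    have hmem : x - y ∈ ball 0 r ↔ y ∈ ball x r := by
      rw [mem_ball_zero_iff, mem_ball_iff_norm']
    rw [inter_indicator_one, Pi.mul_apply]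
    congr 1
    by_cases hy : y ∈ ball x r
    · rw [indicator_of_mem hy, indicator_of_mem (hmem.2 hy)]; rfl
    · rw [indicator_of_notMem hy, indicator_of_notMem (mt hmem.1 hy)]
  simp_rw [h]
  exact integral_indicator_one (measurableSet_ball.inter measurableSet_ball)

theorem volume_ball_inter_ball_eq_of_norm_eq {E : Type*} [NormedAddCommGroup E]
    [InnerProductSpace ℝ E] [FiniteDimensional ℝ E] [MeasurableSpace E] [BorelSpace E]
    {x y : E} (h : ‖x‖ = ‖y‖) (r s : ℝ) :
    volume (ball x r ∩ ball (0 : E) s) = volume (ball y r ∩ ball (0 : E) s) := by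
  set L := (ℝ ∙ (x - y))ᗮ.reflection
  have hpre : L ⁻¹' (ball y r ∩ ball 0 s) = ball x r ∩ ball 0 s := by
    ext z
    rw [mem_preimage, mem_inter_iff, mem_ball, mem_ball, ← Submodule.reflection_sub h,
      ← L.map_zero, L.dist_map, L.dist_map, L.map_zero]
    rfl
  rw [← hpre, L.measurePreserving.measure_preimage
    (measurableSet_ball.inter measurableSet_ball).nullMeasurableSet]

theorem volume_setOf_sq_add_sq_lt (c : ℝ) :
    volume {p : Fin 2 → ℝ | p 0 ^ 2 + p 1 ^ 2 < c} = ENNReal.ofReal (π * max 0 c) := by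
  have hpre : {p : Fin 2 → ℝ | p 0 ^ 2 + p 1 ^ 2 < c} =
      WithLp.toLp 2 ⁻¹' ball (0 : EuclideanSpace ℝ (Fin 2)) √(max 0 c) := by
    ext p
    have hsum : 0 ≤ p 0 ^ 2 + p 1 ^ 2 := by positivity
    simp only [mem_ofPred_eq, mem_preimage, mem_ball_zero_iff, EuclideanSpace.norm_eq,
      Fin.sum_univ_two, Real.norm_eq_abs, sq_abs, Real.sqrt_lt_sqrt_iff hsum, lt_max_iff,
      hsum.not_gt, false_or]
  rw [hpre, (PiLp.volume_preserving_toLp (Fin 2)).measure_preimage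
    measurableSet_ball.nullMeasurableSet, EuclideanSpace.volume_ball_fin_two,
    ← ENNReal.ofReal_pow (Real.sqrt_nonneg _), Real.sq_sqrt (le_max_left 0 c),
    ← ENNReal.ofReal_mul (le_max_left 0 c), mul_comm]

theorem volume_setOf_snd_sq_add_sq_lt {g : ℝ → ℝ} (hg : Measurable g) :
    volume {q : ℝ × (Fin 2 → ℝ) | q.2 0 ^ 2 + q.2 1 ^ 2 < g q.1} =
      ∫⁻ t, ENNReal.ofReal (π * max 0 (g t)) := by
  have hmeas : MeasurableSet {q : ℝ × (Fin 2 → ℝ) | q.2 0 ^ 2 + q.2 1 ^ 2 < g q.1} :=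
    measurableSet_lt (by fun_prop) (hg.comp measurable_fst)
  rw [Measure.volume_eq_prod, Measure.prod_apply hmeas]
  exact lintegral_congr fun t => volume_setOf_sq_add_sq_lt (g t)

noncomputable def euclideanSpaceFinThreeEquivProd :
    ℝ × (Fin 2 → ℝ) ≃ᵐ EuclideanSpace ℝ (Fin 3) :=
  (MeasurableEquiv.piFinSuccAbove (fun _ => ℝ) 0).symm.trans (MeasurableEquiv.toLp 2 _)

theorem measurePreserving_euclideanSpaceFinThreeEquivProd :
    MeasurePreserving euclideanSpaceFinThreeEquivProd :=
  (PiLp.volume_preserving_toLp (Fin 3)).comp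
    (volume_preserving_piFinSuccAbove (fun _ => ℝ) 0).symm

theorem euclideanSpaceFinThreeEquivProd_preimage_ball_inter_ball {d r : ℝ} (hr : 0 < r) :
    euclideanSpaceFinThreeEquivProd ⁻¹'
        (ball (d • EuclideanSpace.single 0 1) r ∩ ball 0 r) =
      {q | q.2 0 ^ 2 + q.2 1 ^ 2 < r ^ 2 - max ((q.1 - d) ^ 2) (q.1 ^ 2)} := by
  ext ⟨t, p⟩
  have h0 : euclideanSpaceFinThreeEquivProd (t, p) 0 = t := rfl
  have h1 : euclideanSpaceFinThreeEquivProd (t, p) 1 = p 0 := rfl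
  have h2 : euclideanSpaceFinThreeEquivProd (t, p) 2 = p 1 := rfl
  simp only [mem_preimage, mem_inter_iff, mem_ball, EuclideanSpace.dist_eq, Real.sqrt_lt' hr,
    Fin.sum_univ_three, h0, h1, h2, Real.dist_eq, sq_abs]
  simp only [PiLp.smul_apply, PiLp.single_eq_same,
    PiLp.single_eq_of_ne (p := 2) (by decide : (1 : Fin 3) ≠ 0),
    PiLp.single_eq_of_ne (p := 2) (by decide : (2 : Fin 3) ≠ 0), PiLp.zero_apply, smul_eq_mul,
    mul_one, sub_zero, mem_ofPred_eq, lt_sub_comm, max_lt_iff]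
  constructor <;> rintro ⟨h₁, h₂⟩ <;> constructor <;> linarith

theorem lintegral_ofReal_pi_mul_lens_section {d r : ℝ} (hd : 0 ≤ d) (hdr : d ≤ 2 * r) :
    ∫⁻ t, ENNReal.ofReal (π * max 0 (r ^ 2 - max ((t - d) ^ 2) (t ^ 2))) =
      ENNReal.ofReal (π * (4 * r ^ 3 / 3 - r ^ 2 * d + d ^ 3 / 12)) := by
  set f : ℝ → ℝ := fun t => π * max 0 (r ^ 2 - max ((t - d) ^ 2) (t ^ 2))
  have hf : Continuous f := by fun_prop
  have hsupp : (fun t => ENNReal.ofReal (f t)).support ⊆ Icc (d - r) r := by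
    intro t ht
    by_contra hout
    have hmax : r ^ 2 ≤ max ((t - d) ^ 2) (t ^ 2) := by
      rcases not_and_or.mp hout with h | h
      · exact le_max_of_le_left (by nlinarith)
      · exact le_max_of_le_right (by nlinarith)
    simp [f, hmax] at ht
  have hleft : EqOn f (fun t => π * (r ^ 2 - (t - d) ^ 2)) (uIcc (d - r) (d / 2)) := by
    intro t ht
    rw [uIcc_of_le (by linarith)] at ht
    simp only [f]
    have hsq : t ^ 2 ≤ (t - d) ^ 2 := by nlinarith [ht.2]
    rw [max_eq_left hsq, max_eq_right (by nlinarith [ht.1, ht.2])]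
  have hright : EqOn f (fun t => π * (r ^ 2 - t ^ 2)) (uIcc (d / 2) r) := by
    intro t ht
    rw [uIcc_of_le (by linarith)] at ht
    simp only [f]
    have hsq : (t - d) ^ 2 ≤ t ^ 2 := by nlinarith [ht.1]
    rw [max_eq_right hsq, max_eq_right (by nlinarith [ht.1, ht.2])]
  rw [← setLIntegral_eq_of_support_subset hsupp, ← ofReal_integral_eq_lintegral_ofReal
    hf.integrableOn_Icc (ae_of_all _ fun t => by positivity), integral_Icc_eq_integral_Ioc,
    ← intervalIntegral.integral_of_le (by linarith),
    ← intervalIntegral.integral_add_adjacent_intervals (b := d / 2) (hf.intervalIntegrable _ _)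
      (hf.intervalIntegrable _ _), intervalIntegral.integral_congr hleft,
    intervalIntegral.integral_congr hright]
  have hshift := intervalIntegral.integral_comp_sub_right (fun t => π * (r ^ 2 - t ^ 2))
    (a := d - r) (b := d / 2) d
  rw [hshift]
  simp only [sub_sub_cancel_left, intervalIntegral.integral_const_mul, intervalIntegrable_const,
    intervalIntegral.intervalIntegrable_pow, intervalIntegral.integral_sub,
    intervalIntegral.integral_const, sub_neg_eq_add, smul_eq_mul, integral_pow, Nat.reduceAdd,
    Nat.cast_ofNat]
  congr 1
  ring

theorem volume_ball_smul_single_inter_ball {d r : ℝ} (hr : 0 < r) (hd : 0 ≤ d)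
    (hdr : d ≤ 2 * r) :
    volume (ball (d • EuclideanSpace.single (0 : Fin 3) (1 : ℝ)) r ∩ ball 0 r) =
      ENNReal.ofReal (π * (4 * r ^ 3 / 3 - r ^ 2 * d + d ^ 3 / 12)) := by
  rw [← measurePreserving_euclideanSpaceFinThreeEquivProd.measure_preimage_equiv,
    euclideanSpaceFinThreeEquivProd_preimage_ball_inter_ball hr,
    volume_setOf_snd_sq_add_sq_lt (g := fun t => r ^ 2 - max ((t - d) ^ 2) (t ^ 2)) (by fun_prop),
    lintegral_ofReal_pi_mul_lens_section hd hdr]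

noncomputable def lensVolume (d r : ℝ) : ℝ := π / 12 * (4 * r + d) * max 0 (2 * r - d) ^ 2

theorem measureReal_ball_inter_ball_eq_lensVolume (x : EuclideanSpace ℝ (Fin 3)) {r : ℝ}
    (hr : 0 < r) : volume.real (ball x r ∩ ball 0 r) = lensVolume ‖x‖ r := by
  rcases le_or_gt (2 * r) ‖x‖ with hfar | hnear
  · have hdisj : Disjoint (ball x r) (ball 0 r) :=
      ball_disjoint_ball (by rw [dist_zero_right]; linarith)
    rw [hdisj.inter_eq, measureReal_empty, lensVolume, max_eq_left (by linarith)]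
    ring
  · have hnorm : ‖x‖ = ‖‖x‖ • EuclideanSpace.single (0 : Fin 3) (1 : ℝ)‖ := by
      rw [norm_smul, PiLp.norm_single, norm_one, mul_one, norm_norm]
    rw [measureReal_def, volume_ball_inter_ball_eq_of_norm_eq hnorm,
      volume_ball_smul_single_inter_ball hr (norm_nonneg x) hnear.le, lensVolume,
      max_eq_right (by linarith), ENNReal.toReal_ofReal]
    · ring
    · have hcube : 4 * r ^ 3 / 3 - r ^ 2 * ‖x‖ + ‖x‖ ^ 3 / 12 =
          (2 * r - ‖x‖) ^ 2 * (4 * r + ‖x‖) / 12 := by ring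
      rw [hcube]
      positivity

theorem inv_pow_eqOn_rpow_neg (n : ℕ) {c : ℝ} (hc : 0 ≤ c) :
    EqOn (fun r : ℝ => (r ^ n)⁻¹) (fun r => r ^ (-(n : ℝ))) (Ioi c) := fun r hr => by
  dsimp only
  rw [Real.rpow_neg (hc.trans (le_of_lt hr)), Real.rpow_natCast]

theorem integrableOn_Ioi_inv_pow {n : ℕ} (hn : 2 ≤ n) {c : ℝ} (hc : 0 < c) :
    IntegrableOn (fun r : ℝ => (r ^ n)⁻¹) (Ioi c) := by
  have hn' : (2 : ℝ) ≤ n := by exact_mod_cast hn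
  exact (integrableOn_Ioi_rpow_of_lt (by linarith) hc).congr_fun
    (inv_pow_eqOn_rpow_neg n hc.le).symm measurableSet_Ioi

theorem integral_Ioi_inv_pow {n : ℕ} (hn : 2 ≤ n) {c : ℝ} (hc : 0 < c) :
    ∫ r in Ioi c, (r ^ n)⁻¹ = (c ^ (n - 1))⁻¹ / (n - 1) := by
  have hn' : (2 : ℝ) ≤ n := by exact_mod_cast hn
  have hexp : -(n : ℝ) + 1 = -((n - 1 : ℕ) : ℝ) := by
    rw [Nat.cast_sub (by omega)]
    ring
  rw [setIntegral_congr_fun measurableSet_Ioi (inv_pow_eqOn_rpow_neg n hc.le),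
    integral_Ioi_rpow_of_lt (by linarith) hc, hexp, Real.rpow_neg hc.le, Real.rpow_natCast,
    neg_div_neg_eq, Nat.cast_sub (by omega), Nat.cast_one]

theorem integral_Ioi_lensVolume_div_pow_five {d : ℝ} (hd : 0 < d) :
    ∫ r in Ioi 0, 1 / r ^ 5 * lensVolume d r = π / d := by
  have hc : 0 < d / 2 := half_pos hd
  have hsmall : ∀ r ∈ Ioi 0 \ Ioi (d / 2), 1 / r ^ 5 * lensVolume d r = 0 := by
    rintro r ⟨-, hr⟩
    rw [mem_Ioi, not_lt] at hr
    rw [lensVolume, max_eq_left (by linarith)]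
    ring
  have hlarge : EqOn (fun r => 1 / r ^ 5 * lensVolume d r)
      (fun r => π / 12 * (16 * (r ^ 2)⁻¹ - 12 * d * (r ^ 3)⁻¹ + d ^ 3 * (r ^ 5)⁻¹))
      (Ioi (d / 2)) := by
    intro r hr
    have hr0 : 0 < r := hc.trans hr
    simp only [lensVolume]
    rw [max_eq_right (by linarith [mem_Ioi.mp hr])]
    field_simp
    ring
  have h2 := integrableOn_Ioi_inv_pow (le_refl 2) hc
  have h3 := integrableOn_Ioi_inv_pow (by norm_num : 2 ≤ 3) hc
  have h5 := integrableOn_Ioi_inv_pow (by norm_num : 2 ≤ 5) hc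
  have h23 : IntegrableOn (fun r : ℝ => 16 * (r ^ 2)⁻¹ - 12 * d * (r ^ 3)⁻¹) (Ioi (d / 2)) :=
    (h2.const_mul _).sub (h3.const_mul _)
  rw [setIntegral_eq_of_subset_of_forall_sdiff_eq_zero measurableSet_Ioi (Ioi_subset_Ioi hc.le)
    hsmall, setIntegral_congr_fun measurableSet_Ioi hlarge, integral_const_mul,
    integral_add h23 (h5.const_mul _),
    integral_sub (h2.const_mul _) (h3.const_mul _), integral_const_mul, integral_const_mul,
    integral_const_mul, integral_Ioi_inv_pow (le_refl 2) hc,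
    integral_Ioi_inv_pow (by norm_num : 2 ≤ 3) hc, integral_Ioi_inv_pow (by norm_num : 2 ≤ 5) hc]
  field_simp
  ring

/-- The Fefferman–de la Llave formula for the Coulomb potential in ℝ³:
`1/|x| = (1/π) ∫_0^∞ r⁻⁵ (1_{B_r} * 1_{B_r})(x) dr` for all `x ≠ 0`. -/
theorem fefferman_de_la_llave_coulomb
    (x : EuclideanSpace ℝ (Fin 3)) (hx : x ≠ 0) :
    1 / ‖x‖ = (1 / π) * ∫ r in Ioi (0:ℝ), (1 / r ^ 5) *
      ∫ y, (Metric.ball (0 : EuclideanSpace ℝ (Fin 3)) r).indicator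
              (fun _ => (1:ℝ)) (x - y) *
           (Metric.ball (0 : EuclideanSpace ℝ (Fin 3)) r).indicator
              (fun _ => (1:ℝ)) y := by
  have hd : 0 < ‖x‖ := norm_pos_iff.mpr hx
  have hconv : ∀ r ∈ Ioi (0 : ℝ), (1 / r ^ 5) *
      ∫ y, (ball (0 : EuclideanSpace ℝ (Fin 3)) r).indicator (fun _ => (1 : ℝ)) (x - y) *
        (ball (0 : EuclideanSpace ℝ (Fin 3)) r).indicator (fun _ => (1 : ℝ)) y =
      1 / r ^ 5 * lensVolume ‖x‖ r := fun r hr => by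
    rw [integral_indicator_ball_sub_mul_indicator_ball,
      measureReal_ball_inter_ball_eq_lensVolume x hr]
  rw [setIntegral_congr_fun measurableSet_Ioi hconv, integral_Ioi_lensVolume_div_pow_five hd]
  field_simp
end

section
/- Let $d\ge 1$, $Q=[0,L]^d$, and let $u_k$ be the Dirichlet sine eigenfunctions. If $S_M$ denotes the indices of the $M$ lowest eigenvalues, then $\frac{1}{M}\sum_{k\in S_M}|u_k|^2 \to \frac{\mathbf{1}_Q}{|Q|}$ strongly in $L^p(Q)$ for every $1\le p<\infty$ as $M\to\infty$. -/
/-!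
Since `u_k² = ∏ᵢ (2/L) sin²(π kᵢ xᵢ / L)` and
`∫₀ᴸ (2/L)² sin²(π a t/L) sin²(π b t/L) dt = (1 + [a = b]/2) / L`, Fubini shows that
`∫_Q u_k² u_{k'}²` equals `L⁻ᵈ` unless `k` and `k'` share a coordinate, and is at most
`(3/2)ᵈ L⁻ᵈ` in any case. Hence the squared `L²` distance between the average density
`ρ_M = M⁻¹ ∑_{k ∈ S_M} u_k²` and `L⁻ᵈ` is at most `(3/2)ᵈ L⁻ᵈ N_M / M²`, where `N_M` counts the
pairs in `S_M` sharing a coordinate.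

Minimality makes `S_M` almost a ball: with `s = ⌊√(max_{S_M} |k|²)⌋`, every `k ∈ S_M` lies in
`[0, s]ᵈ` and `S_M` contains the box `[1, s/2d]ᵈ`. So `N_M ≤ d M (s+1)ᵈ⁻¹` while `M ≥ (s/2d)ᵈ`,
whence `N_M / M² = O(1/s) → 0`.

Finally `0 ≤ ρ_M ≤ (2/L)ᵈ`, and for a uniformly bounded sequence `L²` convergence implies `Lᵖ`
convergence for all `p ≥ 1`, by `|g|ᵖ ≤ Cᵖ⁻¹ |g|` and Cauchy–Schwarz.
-/

open MeasureTheory Filter Set Real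
open scoped Topology

lemma integral_cos_two_pi_int_mul_div (L : ℝ) (hL : L ≠ 0) (m : ℤ) :
    ∫ t in (0:ℝ)..L, cos (2 * π * m * t / L) = if m = 0 then L else 0 := by
  split_ifs with hm
  · simp [hm]
  have hc : 2 * π * m / L ≠ 0 := by simp [hm, hL, pi_ne_zero]
  have hsin : sin (2 * π * m / L * L) = 0 := by
    rw [div_mul_cancel₀ _ hL, ← sin_int_mul_pi (2 * m)]; push_cast; ring_nf
  simp_rw [show ∀ t, 2 * π * m * t / L = 2 * π * m / L * t from fun t => by ring]
  rw [intervalIntegral.integral_comp_mul_left (fun t => cos t) hc, integral_cos, mul_zero,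
    sin_zero, hsin, sub_zero, smul_zero]

noncomputable def sinModeSq (L : ℝ) (a : ℕ) (t : ℝ) : ℝ := 2 / L * sin (π * a * t / L) ^ 2

lemma sinModeSq_eq (L : ℝ) (a : ℕ) (t : ℝ) :
    sinModeSq L a t = (1 - cos (2 * π * (a : ℤ) * t / L)) / L := by
  rw [sinModeSq, sin_sq_eq_half_sub]; push_cast; ring_nf

lemma sinModeSq_mul_eq (L : ℝ) (a b : ℕ) (t : ℝ) :
    sinModeSq L a t * sinModeSq L b t = (1 - cos (2 * π * (a : ℤ) * t / L)
      - cos (2 * π * (b : ℤ) * t / L) + cos (2 * π * ((a - b : ℤ) : ℝ) * t / L) / 2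
      + cos (2 * π * ((a + b : ℤ) : ℝ) * t / L) / 2) / L ^ 2 := by
  rw [sinModeSq_eq, sinModeSq_eq]
  push_cast
  have h := two_mul_cos_mul_cos (2 * π * a * t / L) (2 * π * b * t / L)
  rw [show 2 * π * ((a:ℝ) - b) * t / L = 2 * π * a * t / L - 2 * π * b * t / L by ring,
    show 2 * π * ((a:ℝ) + b) * t / L = 2 * π * a * t / L + 2 * π * b * t / L by ring]
  linear_combination h / (2 * L ^ 2)

lemma integral_sinModeSq (L : ℝ) (hL : L ≠ 0) {a : ℕ} (ha : a ≠ 0) :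
    ∫ t in (0:ℝ)..L, sinModeSq L a t = 1 := by
  simp_rw [sinModeSq_eq, intervalIntegral.integral_div]
  rw [intervalIntegral.integral_sub intervalIntegrable_const
    ((by fun_prop : Continuous fun t => cos (2 * π * (a : ℤ) * t / L)).intervalIntegrable _ _),
    integral_cos_two_pi_int_mul_div L hL]
  simp [ha, hL]

lemma integral_sinModeSq_mul (L : ℝ) (hL : L ≠ 0) {a b : ℕ} (ha : a ≠ 0) (hb : b ≠ 0) :
    ∫ t in (0:ℝ)..L, sinModeSq L a t * sinModeSq L b t = (1 + if a = b then 1 / 2 else 0) / L := by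
  have hi : ∀ c : ℝ, IntervalIntegrable (fun t => cos (2 * π * c * t / L)) volume 0 L :=
    fun c => (by fun_prop : Continuous fun t => cos (2 * π * c * t / L)).intervalIntegrable _ _
  simp_rw [sinModeSq_mul_eq, intervalIntegral.integral_div]
  rw [intervalIntegral.integral_add (((intervalIntegrable_const.sub (hi _)).sub (hi _)).add
      ((hi _).div_const _)) ((hi _).div_const _),
    intervalIntegral.integral_add ((intervalIntegrable_const.sub (hi _)).sub (hi _))
      ((hi _).div_const _),
    intervalIntegral.integral_sub (intervalIntegrable_const.sub (hi _)) (hi _),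
    intervalIntegral.integral_sub intervalIntegrable_const (hi _)]
  simp only [intervalIntegral.integral_div, integral_cos_two_pi_int_mul_div L hL,
    intervalIntegral.integral_const]
  have hab : (a : ℤ) + b ≠ 0 := by omega
  simp only [Nat.cast_eq_zero, ha, hb, hab, sub_eq_zero, Nat.cast_inj, if_false]
  split_ifs <;> field_simp <;> ring

section Cube

variable {ι : Type*} [Fintype ι]

noncomputable abbrev cubeMeasure (ι : Type*) [Fintype ι] (L : ℝ) : Measure (ι → ℝ) :=
  Measure.pi fun _ => volume.restrict (Icc 0 L)

lemma volume_restrict_cube (L : ℝ) :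
    volume.restrict (univ.pi fun _ : ι => Icc 0 L) = cubeMeasure ι L := by
  rw [volume_pi, Measure.restrict_pi_pi]

lemma integral_cubeMeasure_prod {L : ℝ} (hL : 0 ≤ L) (f : ι → ℝ → ℝ) :
    ∫ x, ∏ i, f i (x i) ∂cubeMeasure ι L = ∏ i, ∫ t in (0:ℝ)..L, f i t := by
  rw [integral_fintype_prod_eq_prod]
  simp_rw [integral_Icc_eq_integral_Ioc, ← intervalIntegral.integral_of_le hL]

lemma measureReal_cubeMeasure_univ {L : ℝ} (hL : 0 ≤ L) :
    (cubeMeasure ι L).real univ = L ^ Fintype.card ι := by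
  simpa using integral_cubeMeasure_prod (ι := ι) hL fun _ _ => 1

noncomputable def modeSq (L : ℝ) (k : ι → ℕ) (x : ι → ℝ) : ℝ := ∏ i, sinModeSq L (k i) (x i)

lemma prod_sqrt_mul_sin_sq {L : ℝ} (hL : 0 ≤ L) (k : ι → ℕ) (x : ι → ℝ) :
    (∏ i, √(2 / L) * sin (π * k i * x i / L)) ^ 2 = modeSq L k x := by
  rw [← Finset.prod_pow]
  refine Finset.prod_congr rfl fun i _ => ?_
  rw [mul_pow, sq_sqrt (by positivity), sinModeSq]

@[fun_prop]
lemma continuous_modeSq (L : ℝ) (k : ι → ℕ) : Continuous (modeSq L k) := by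
  unfold modeSq sinModeSq; fun_prop

lemma modeSq_nonneg {L : ℝ} (hL : 0 ≤ L) (k : ι → ℕ) (x : ι → ℝ) : 0 ≤ modeSq L k x :=
  Finset.prod_nonneg fun i _ => by unfold sinModeSq; positivity

lemma modeSq_le {L : ℝ} (hL : 0 ≤ L) (k : ι → ℕ) (x : ι → ℝ) :
    modeSq L k x ≤ (2 / L) ^ Fintype.card ι := by
  rw [← Finset.card_univ, ← Finset.prod_const]
  exact Finset.prod_le_prod (fun i _ => by unfold sinModeSq; positivity)
    fun i _ => mul_le_of_le_one_right (by positivity) (sin_sq_le_one _)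

lemma norm_modeSq_le {L : ℝ} (hL : 0 ≤ L) (k : ι → ℕ) (x : ι → ℝ) :
    ‖modeSq L k x‖ ≤ (2 / L) ^ Fintype.card ι :=
  (Real.norm_of_nonneg (modeSq_nonneg hL k x)).trans_le (modeSq_le hL k x)

lemma integrable_modeSq {L : ℝ} (hL : 0 ≤ L) (k : ι → ℕ) :
    Integrable (modeSq L k) (cubeMeasure ι L) :=
  .of_bound (continuous_modeSq L k).aestronglyMeasurable _ (.of_forall (norm_modeSq_le hL k))

lemma integral_modeSq {L : ℝ} (hL : 0 < L) {k : ι → ℕ} (hk : ∀ i, k i ≠ 0) :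
    ∫ x, modeSq L k x ∂cubeMeasure ι L = 1 := by
  unfold modeSq
  rw [integral_cubeMeasure_prod hL.le fun i => sinModeSq L (k i)]
  exact Finset.prod_eq_one fun i _ => integral_sinModeSq L hL.ne' (hk i)

noncomputable def overlapWeight (k k' : ι → ℕ) : ℝ := ∏ i, (1 + if k i = k' i then 1 / 2 else 0)

lemma integral_modeSq_mul {L : ℝ} (hL : 0 < L) {k k' : ι → ℕ} (hk : ∀ i, k i ≠ 0)
    (hk' : ∀ i, k' i ≠ 0) :
    ∫ x, modeSq L k x * modeSq L k' x ∂cubeMeasure ι L =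
      overlapWeight k k' / L ^ Fintype.card ι := by
  simp_rw [modeSq, ← Finset.prod_mul_distrib]
  rw [integral_cubeMeasure_prod hL.le fun i t => sinModeSq L (k i) t * sinModeSq L (k' i) t]
  simp_rw [integral_sinModeSq_mul L hL.ne' (hk _) (hk' _)]
  rw [Finset.prod_div_distrib, Finset.prod_const, Finset.card_univ, overlapWeight]

lemma overlapWeight_eq_one {k k' : ι → ℕ} (h : ∀ i, k i ≠ k' i) : overlapWeight k k' = 1 :=
  Finset.prod_eq_one fun i _ => by simp [h i]

lemma overlapWeight_le (k k' : ι → ℕ) : overlapWeight k k' ≤ (3 / 2) ^ Fintype.card ι := by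
  rw [← Finset.card_univ, ← Finset.prod_const]
  exact Finset.prod_le_prod (fun i _ => by positivity) fun i _ => by split_ifs <;> norm_num

end Cube

lemma integral_sub_const_sq {α : Type*} [MeasurableSpace α] {μ : Measure α} [IsFiniteMeasure μ]
    {f : α → ℝ} (hf : MemLp f 2 μ) (c : ℝ) :
    ∫ x, (f x - c) ^ 2 ∂μ = ∫ x, f x ^ 2 ∂μ - 2 * c * ∫ x, f x ∂μ + c ^ 2 * μ.real univ := by
  have hf1 : Integrable f μ := hf.integrable one_le_two
  have hexpand : (fun x => (f x - c) ^ 2) = fun x => f x ^ 2 - 2 * c * f x + c ^ 2 := by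
    ext x; ring
  have hlin : Integrable (fun x => f x ^ 2 - 2 * c * f x) μ :=
    hf.integrable_sq.sub (hf1.const_mul _)
  rw [hexpand, integral_add hlin (integrable_const _),
    integral_sub hf.integrable_sq (hf1.const_mul _), integral_const_mul, integral_const,
    smul_eq_mul, mul_comm (μ.real univ)]

def pairsSharingCoord {ι : Type*} [Fintype ι] (T : Finset (ι → ℕ)) :
    Finset ((ι → ℕ) × (ι → ℕ)) :=
  (T ×ˢ T).filter fun pr => ∃ i, pr.1 i = pr.2 i

section L2

variable {ι : Type*} [Fintype ι] {L : ℝ} {T : Finset (ι → ℕ)}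

lemma sum_overlapWeight_le (T : Finset (ι → ℕ)) :
    ∑ pr ∈ T ×ˢ T, overlapWeight pr.1 pr.2 ≤
      (T.card : ℝ) ^ 2 + (3 / 2) ^ Fintype.card ι * (pairsSharingCoord T).card := by
  have hsharing : ∑ pr ∈ T ×ˢ T, (overlapWeight pr.1 pr.2 - 1) =
      ∑ pr ∈ pairsSharingCoord T, (overlapWeight pr.1 pr.2 - 1) := by
    refine (Finset.sum_filter_of_ne fun pr _ hne => ?_).symm
    by_contra! h
    exact hne (by rw [overlapWeight_eq_one h, sub_self])
  have hle : ∑ pr ∈ pairsSharingCoord T, (overlapWeight pr.1 pr.2 - 1) ≤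
      (pairsSharingCoord T).card * (3 / 2) ^ Fintype.card ι :=
    (Finset.sum_le_card_nsmul _ _ _ fun pr _ => by
      linarith [overlapWeight_le pr.1 pr.2]).trans_eq (nsmul_eq_mul _ _)
  rw [Finset.sum_sub_distrib, Finset.sum_const, Finset.card_product, nsmul_one] at hsharing
  push_cast at hsharing
  linarith

lemma integral_sum_modeSq (hL : 0 < L) (hpos : ∀ k ∈ T, ∀ i, k i ≠ 0) :
    ∫ x, ∑ k ∈ T, modeSq L k x ∂cubeMeasure ι L = T.card := by
  rw [integral_finsetSum _ fun k _ => integrable_modeSq hL.le k]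
  rw [Finset.sum_congr rfl fun k hk => integral_modeSq hL (hpos k hk)]
  simp

lemma integral_sum_modeSq_sq (hL : 0 < L) (hpos : ∀ k ∈ T, ∀ i, k i ≠ 0) :
    ∫ x, (∑ k ∈ T, modeSq L k x) ^ 2 ∂cubeMeasure ι L =
      (∑ pr ∈ T ×ˢ T, overlapWeight pr.1 pr.2) / L ^ Fintype.card ι := by
  simp_rw [sq, Finset.sum_mul_sum, ← Finset.sum_product']
  have hint : ∀ pr : (ι → ℕ) × (ι → ℕ),
      Integrable (fun x => modeSq L pr.1 x * modeSq L pr.2 x) (cubeMeasure ι L) := fun pr =>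
    (integrable_modeSq hL.le pr.2).bdd_mul (continuous_modeSq L pr.1).aestronglyMeasurable
      (.of_forall (norm_modeSq_le hL.le pr.1))
  rw [integral_finsetSum _ fun pr _ => hint pr]
  rw [Finset.sum_div]
  refine Finset.sum_congr rfl fun pr hpr => ?_
  rw [Finset.mem_product] at hpr
  exact integral_modeSq_mul hL (hpos _ hpr.1) (hpos _ hpr.2)

lemma avg_modeSq_nonneg (hL : 0 ≤ L) (T : Finset (ι → ℕ)) (x : ι → ℝ) :
    0 ≤ 1 / (T.card : ℝ) * ∑ k ∈ T, modeSq L k x :=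
  mul_nonneg (by positivity) (Finset.sum_nonneg fun k _ => modeSq_nonneg hL k x)

lemma avg_modeSq_le (hL : 0 ≤ L) (T : Finset (ι → ℕ)) (x : ι → ℝ) :
    1 / (T.card : ℝ) * ∑ k ∈ T, modeSq L k x ≤ (2 / L) ^ Fintype.card ι := by
  rcases T.eq_empty_or_nonempty with rfl | hT
  · simp only [Finset.sum_empty, mul_zero]; positivity
  rw [one_div, inv_mul_le_iff₀ (by simpa using hT.card_pos), ← nsmul_eq_mul]
  exact Finset.sum_le_card_nsmul _ _ _ fun k _ => modeSq_le hL k x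

lemma integral_avg_modeSq_sub_sq_le (hL : 0 < L) (hT : T.Nonempty)
    (hpos : ∀ k ∈ T, ∀ i, k i ≠ 0) :
    ∫ x, (1 / (T.card : ℝ) * ∑ k ∈ T, modeSq L k x - 1 / L ^ Fintype.card ι) ^ 2
        ∂cubeMeasure ι L ≤
      (3 / 2) ^ Fintype.card ι / L ^ Fintype.card ι *
        ((pairsSharingCoord T).card / (T.card : ℝ) ^ 2) := by
  set n := Fintype.card ι
  set M : ℝ := (T.card : ℝ)
  have hM : 0 < M := by simpa [M] using hT.card_pos
  have hmem : MemLp (fun x => 1 / M * ∑ k ∈ T, modeSq L k x) 2 (cubeMeasure ι L) :=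
    .of_bound (by fun_prop) ((2 / L) ^ n) <|
      .of_forall fun x => (Real.norm_of_nonneg (avg_modeSq_nonneg hL.le T x)).trans_le
        (avg_modeSq_le hL.le T x)
  rw [integral_sub_const_sq hmem]
  simp_rw [mul_pow]
  rw [integral_const_mul, integral_const_mul, integral_sum_modeSq hL hpos,
    integral_sum_modeSq_sq hL hpos, measureReal_cubeMeasure_univ hL.le]
  have hW := sum_overlapWeight_le T
  calc _ = ((∑ pr ∈ T ×ˢ T, overlapWeight pr.1 pr.2) - M ^ 2) / (L ^ n * M ^ 2) := by
        field_simp; ring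
    _ ≤ (3 / 2) ^ n * (pairsSharingCoord T).card / (L ^ n * M ^ 2) := by
        gcongr; linarith
    _ = _ := by field_simp

end L2

lemma rpow_le_rpow_sub_one_mul {y C p : ℝ} (hy : 0 ≤ y) (hyC : y ≤ C) (hp : 1 ≤ p) :
    y ^ p ≤ C ^ (p - 1) * y := by
  calc y ^ p = y ^ (p - 1) * y := by rw [← rpow_add_one' hy (by linarith), sub_add_cancel]
    _ ≤ C ^ (p - 1) * y := by gcongr

lemma integral_abs_le_sqrt_mul_sqrt {α : Type*} [MeasurableSpace α] {μ : Measure α}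
    [IsFiniteMeasure μ] {f : α → ℝ} (hf : MemLp f 2 μ) :
    ∫ x, |f x| ∂μ ≤ √(∫ x, f x ^ 2 ∂μ) * √(μ.real univ) := by
  have h := integral_mul_le_Lp_mul_Lq_of_nonneg (μ := μ) HolderConjugate.two_two
    (f := fun x => |f x|) (g := fun _ => 1) (.of_forall fun x => abs_nonneg _)
    (.of_forall fun _ => zero_le_one) (by rw [ENNReal.ofReal_ofNat]; exact hf.abs) (memLp_const 1)
  simp only [mul_one, integral_const, smul_eq_mul, rpow_two, sq_abs, one_pow] at h
  rwa [sqrt_eq_rpow, sqrt_eq_rpow]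

theorem tendsto_integral_abs_rpow_of_tendsto_integral_sq {α β : Type*} [MeasurableSpace α]
    {μ : Measure α} [IsFiniteMeasure μ] {l : Filter β} {g : β → α → ℝ} {C p : ℝ} (hp : 1 ≤ p)
    (hg : ∀ n, AEStronglyMeasurable (g n) μ) (hC : ∀ n x, |g n x| ≤ C)
    (h2 : Tendsto (fun n => ∫ x, g n x ^ 2 ∂μ) l (𝓝 0)) :
    Tendsto (fun n => ∫ x, |g n x| ^ p ∂μ) l (𝓝 0) := by
  have hmem : ∀ n, MemLp (g n) 2 μ := fun n => .of_bound (hg n) C (.of_forall (hC n))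
  have hbound : ∀ n, ∫ x, |g n x| ^ p ∂μ ≤
      |C| ^ (p - 1) * (√(∫ x, g n x ^ 2 ∂μ) * √(μ.real univ)) := fun n => by
    calc ∫ x, |g n x| ^ p ∂μ ≤ ∫ x, |C| ^ (p - 1) * |g n x| ∂μ :=
          integral_mono_of_nonneg (.of_forall fun x => by positivity)
            (((hmem n).integrable one_le_two).abs.const_mul _) (.of_forall fun x =>
              rpow_le_rpow_sub_one_mul (abs_nonneg _) ((hC n x).trans (le_abs_self C)) hp)
      _ ≤ _ := by
          rw [integral_const_mul]
          gcongr
          exact integral_abs_le_sqrt_mul_sqrt (hmem n)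
  refine squeeze_zero (fun n => integral_nonneg fun x => by positivity) hbound ?_
  simpa using (h2.sqrt.mul_const _).const_mul (|C| ^ (p - 1))

section Counting

variable {ι : Type*} [Fintype ι] [DecidableEq ι] {T : Finset (ι → ℕ)} {s : ℕ}

lemma card_le_of_forall_le (hs : ∀ k ∈ T, ∀ i, k i ≤ s) :
    T.card ≤ (s + 1) ^ Fintype.card ι := by
  have hsub : T ⊆ Fintype.piFinset fun _ => Finset.range (s + 1) := fun k hk =>
    Fintype.mem_piFinset.2 fun i => Finset.mem_range_succ_iff.2 (hs k hk i)
  simpa using Finset.card_le_card hsub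

lemma pow_le_card_of_box_subset {r : ℕ} (hbox : ∀ g : ι → ℕ, (∀ i, g i ∈ Finset.Icc 1 r) → g ∈ T) :
    r ^ Fintype.card ι ≤ T.card := by
  have hsub : (Fintype.piFinset fun _ => Finset.Icc 1 r) ⊆ T := fun g hg =>
    hbox g (Fintype.mem_piFinset.1 hg)
  simpa using Finset.card_le_card hsub

lemma card_filter_apply_eq_le (hs : ∀ k ∈ T, ∀ i, k i ≤ s) (i : ι) (a : ℕ) :
    (T.filter fun k => k i = a).card ≤ (s + 1) ^ (Fintype.card ι - 1) := by
  have hcard : (Fintype.piFinset fun _ : {j // j ≠ i} => Finset.range (s + 1)).card =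
      (s + 1) ^ (Fintype.card ι - 1) := by
    simp [Fintype.card_subtype_compl]
  rw [← hcard]
  refine Finset.card_le_card_of_injOn (fun k j => k j) (fun k hk => ?_) fun k hk k' hk' h => ?_
  · exact Fintype.mem_piFinset.2 fun j =>
      Finset.mem_range_succ_iff.2 (hs k (Finset.mem_filter.1 hk).1 j)
  · funext j
    by_cases hj : j = i
    · rw [hj, (Finset.mem_filter.1 hk).2, (Finset.mem_filter.1 hk').2]
    · exact congrFun h ⟨j, hj⟩

lemma card_pairsSharingCoord_le (hs : ∀ k ∈ T, ∀ i, k i ≤ s) :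
    (pairsSharingCoord T).card ≤ Fintype.card ι * (T.card * (s + 1) ^ (Fintype.card ι - 1)) := by
  have hsub : pairsSharingCoord T ⊆
      Finset.univ.biUnion fun i => (T ×ˢ T).filter fun pr => pr.1 i = pr.2 i := by
    intro pr hpr
    obtain ⟨hprT, i, hi⟩ := Finset.mem_filter.1 hpr
    exact Finset.mem_biUnion.2 ⟨i, Finset.mem_univ _, Finset.mem_filter.2 ⟨hprT, hi⟩⟩
  have hslice : ∀ i, ((T ×ˢ T).filter fun pr => pr.1 i = pr.2 i).card ≤
      T.card * (s + 1) ^ (Fintype.card ι - 1) := fun i => by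
    rw [Finset.card_filter, Finset.sum_product, ← smul_eq_mul, ← Finset.sum_const]
    refine Finset.sum_le_sum fun k _ => ?_
    rw [← Finset.card_filter]
    simpa only [eq_comm] using card_filter_apply_eq_le hs i (k i)
  calc (pairsSharingCoord T).card
      ≤ ∑ i, ((T ×ˢ T).filter fun pr => pr.1 i = pr.2 i).card :=
        (Finset.card_le_card hsub).trans Finset.card_biUnion_le
    _ ≤ ∑ _i : ι, T.card * (s + 1) ^ (Fintype.card ι - 1) := Finset.sum_le_sum fun i _ => hslice i
    _ = _ := by simp

lemma card_pairsSharingCoord_div_sq_le {r : ℕ} (hr : 0 < r) (hs : ∀ k ∈ T, ∀ i, k i ≤ s)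
    (hbox : ∀ g : ι → ℕ, (∀ i, g i ∈ Finset.Icc 1 r) → g ∈ T) :
    ((pairsSharingCoord T).card : ℝ) / (T.card : ℝ) ^ 2 ≤
      Fintype.card ι * (s + 1 : ℝ) ^ (Fintype.card ι - 1) / (r : ℝ) ^ Fintype.card ι := by
  have hrT : ((r : ℝ) ^ Fintype.card ι) ≤ T.card := by exact_mod_cast pow_le_card_of_box_subset hbox
  have hN : ((pairsSharingCoord T).card : ℝ) ≤
      Fintype.card ι * (T.card * (s + 1 : ℝ) ^ (Fintype.card ι - 1)) := by
    exact_mod_cast card_pairsSharingCoord_le hs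
  have hpos : (0 : ℝ) < (r : ℝ) ^ Fintype.card ι := by positivity
  calc ((pairsSharingCoord T).card : ℝ) / (T.card : ℝ) ^ 2
      ≤ Fintype.card ι * (T.card * (s + 1 : ℝ) ^ (Fintype.card ι - 1)) / (T.card : ℝ) ^ 2 := by
        gcongr
    _ = Fintype.card ι * (s + 1 : ℝ) ^ (Fintype.card ι - 1) / T.card := by
        field_simp
    _ ≤ _ := by gcongr

end Counting

section LowestModes

variable {ι : Type*} [Fintype ι] {T : Finset (ι → ℕ)}

lemma sum_sq_le_sum_sq_of_sum_freq_sq_le {L : ℝ} (hL : L ≠ 0)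
    {k k' : ι → ℕ} (h : ∑ i, (π * k i / L) ^ 2 ≤ ∑ i, (π * k' i / L) ^ 2) :
    ∑ i, k i ^ 2 ≤ ∑ i, k' i ^ 2 := by
  simp_rw [div_pow, mul_pow, ← Finset.sum_div, ← Finset.mul_sum] at h
  rw [div_le_div_iff_of_pos_right (by positivity),
    mul_le_mul_iff_right₀ (by positivity)] at h
  exact_mod_cast h

lemma le_sqrt_sup_sum_sq {k : ι → ℕ} (hk : k ∈ T) (i : ι) :
    k i ≤ Nat.sqrt (T.sup fun k => ∑ i, k i ^ 2) :=
  Nat.le_sqrt'.2 <| (Finset.single_le_sum (fun j _ => Nat.zero_le (k j ^ 2))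
    (Finset.mem_univ i)).trans (Finset.le_sup (f := fun k => ∑ i, k i ^ 2) hk)

lemma mem_of_sum_sq_lt_sup
    (hmin : ∀ k ∈ T, ∀ k' : ι → ℕ, (∀ i, 0 < k' i) → k' ∉ T → ∑ i, k i ^ 2 ≤ ∑ i, k' i ^ 2)
    {k' : ι → ℕ} (hk' : ∀ i, 0 < k' i) (hlt : ∑ i, k' i ^ 2 < T.sup fun k => ∑ i, k i ^ 2) :
    k' ∈ T := by
  by_contra hk'T
  obtain ⟨k, hk, hsup⟩ := Finset.exists_mem_eq_sup T
    (Finset.nonempty_of_ne_empty (by rintro rfl; simp at hlt)) fun k => ∑ i, k i ^ 2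
  have := hmin k hk k' hk' hk'T
  omega

lemma mem_of_forall_mem_Icc
    (hmin : ∀ k ∈ T, ∀ k' : ι → ℕ, (∀ i, 0 < k' i) → k' ∉ T → ∑ i, k i ^ 2 ≤ ∑ i, k' i ^ 2)
    {r : ℕ} (hr : Fintype.card ι * r ^ 2 < T.sup fun k => ∑ i, k i ^ 2) {g : ι → ℕ}
    (hg : ∀ i, g i ∈ Finset.Icc 1 r) : g ∈ T := by
  refine mem_of_sum_sq_lt_sup hmin (fun i => (Finset.mem_Icc.1 (hg i)).1) (lt_of_le_of_lt ?_ hr)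
  calc ∑ i, g i ^ 2 ≤ ∑ _i : ι, r ^ 2 :=
        Finset.sum_le_sum fun i _ => Nat.pow_le_pow_left (Finset.mem_Icc.1 (hg i)).2 2
    _ = Fintype.card ι * r ^ 2 := by simp

end LowestModes

theorem tendsto_card_pairsSharingCoord_div_sq {ι : Type*} [Fintype ι] [Nonempty ι]
    (S : ℕ → Finset (ι → ℕ)) (hcard : ∀ M, (S M).card = M)
    (hmin : ∀ M, ∀ k ∈ S M, ∀ k' : ι → ℕ, (∀ i, 0 < k' i) → k' ∉ S M →
      ∑ i, k i ^ 2 ≤ ∑ i, k' i ^ 2) :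
    Tendsto (fun M => ((pairsSharingCoord (S M)).card : ℝ) / (M : ℝ) ^ 2) atTop (𝓝 0) := by
  classical
  set n := Fintype.card ι
  have hn : 0 < n := Fintype.card_pos
  set s : ℕ → ℕ := fun M => Nat.sqrt ((S M).sup fun k => ∑ i, k i ^ 2)
  -- `r = s / 2n` keeps `n r² < s²`, so the box `[1, r]ⁿ` lies in `S M`, while `s + 1 ≤ 4 n r`.
  set r : ℕ → ℕ := fun M => s M / (2 * n)
  have hcoord : ∀ M, ∀ k ∈ S M, ∀ i, k i ≤ s M := fun M k hk i => le_sqrt_sup_sum_sq hk i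
  have hs : Tendsto s atTop atTop := by
    refine tendsto_atTop_atTop.2 fun b => ⟨b ^ n + 1, fun M hM => ?_⟩
    by_contra! h
    have h1 : M ≤ (s M + 1) ^ n := (hcard M).symm.trans_le (card_le_of_forall_le (hcoord M))
    have h2 : (s M + 1) ^ n ≤ b ^ n := Nat.pow_le_pow_left h n
    omega
  have hr : Tendsto r atTop atTop := (Nat.tendsto_div_const_atTop (by positivity)).comp hs
  refine squeeze_zero' (.of_forall fun M => by positivity) ?_
    ((tendsto_const_div_atTop_nhds_zero_nat (n * (4 * n : ℝ) ^ (n - 1))).comp hr)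
  filter_upwards [hr.eventually_ge_atTop 1] with M hrM
  have hsr : 2 * n * r M ≤ s M := Nat.mul_div_le (s M) (2 * n)
  have hsr' : s M < 2 * n * (r M + 1) := Nat.lt_mul_div_succ (s M) (by positivity)
  have hbox : ∀ g : ι → ℕ, (∀ i, g i ∈ Finset.Icc 1 (r M)) → g ∈ S M := fun g =>
    mem_of_forall_mem_Icc (hmin M) <| calc
      n * r M ^ 2 < (2 * n * r M) ^ 2 := by nlinarith [Nat.mul_le_mul hn hrM]
      _ ≤ s M ^ 2 := Nat.pow_le_pow_left hsr 2
      _ ≤ _ := Nat.sqrt_le' _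
  have hbound := card_pairsSharingCoord_div_sq_le hrM (hcoord M) hbox
  rw [hcard] at hbound
  have hs4 : (s M + 1 : ℝ) ≤ 4 * n * r M := by exact_mod_cast (by nlinarith : s M + 1 ≤ 4 * n * r M)
  calc _ ≤ n * (s M + 1 : ℝ) ^ (n - 1) / (r M : ℝ) ^ n := hbound
    _ ≤ n * (4 * n * r M : ℝ) ^ (n - 1) / (r M : ℝ) ^ n := by gcongr
    _ = n * (4 * n : ℝ) ^ (n - 1) / r M := by
        rw [mul_pow, div_eq_div_iff (by positivity) (by positivity), ← Nat.sub_add_cancel hn,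
          pow_succ]
        simp only [Nat.add_sub_cancel]
        ring

/-- Equidistribution of the averaged density of the first `M` Dirichlet
eigenfunctions on the cube `Q = [0,L]^d`:
`(1/M) ∑_{k ∈ S_M} |u_k|² → 1_Q / |Q|` strongly in `L^p(Q)` for every `1 ≤ p < ∞`. -/
theorem dirichlet_eigenfunction_density_equidistribution
    (d : ℕ) (hd : 1 ≤ d) (L : ℝ) (hL : 0 < L)
    (Q : Set (Fin d → ℝ)) (hQ : Q = Set.pi Set.univ (fun _ => Icc (0:ℝ) L))
    (u : (Fin d → ℕ) → (Fin d → ℝ) → ℝ)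
    (hu : ∀ k x, u k x = ∏ i, Real.sqrt (2 / L) * Real.sin (π * k i * x i / L))
    (S : ℕ → Finset (Fin d → ℕ))
    (hpos : ∀ M, ∀ k ∈ S M, ∀ i, 0 < k i)
    (hcard : ∀ M, (S M).card = M)
    (hmin : ∀ M, ∀ k ∈ S M, ∀ k' : Fin d → ℕ, (∀ i, 0 < k' i) → k' ∉ S M →
      (∑ i, (π * k i / L) ^ 2) ≤ ∑ i, (π * k' i / L) ^ 2) :
    ∀ p : ℝ, 1 ≤ p →
      Tendsto (fun M : ℕ =>
          ∫ x in Q, |(1 / (M : ℝ)) * (∑ k ∈ S M, u k x ^ 2) - 1 / L ^ d| ^ p)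
        atTop (nhds 0) := by
  intro p hp
  have : Nonempty (Fin d) := Fin.pos_iff_nonempty.1 hd
  have hu2 : ∀ k x, u k x ^ 2 = modeSq L k x := fun k x => by
    rw [hu, prod_sqrt_mul_sin_sq hL.le]
  have hpos' : ∀ M, ∀ k ∈ S M, ∀ i, k i ≠ 0 := fun M k hk i => (hpos M k hk i).ne'
  have hcount := tendsto_card_pairsSharingCoord_div_sq S hcard fun M k hk k' hk' hk'S =>
    sum_sq_le_sum_sq_of_sum_freq_sq_le hL.ne' (hmin M k hk k' hk' hk'S)
  subst hQ
  simp_rw [hu2, volume_restrict_cube]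
  refine tendsto_integral_abs_rpow_of_tendsto_integral_sq (C := (2 / L) ^ d + 1 / L ^ d) hp
    (fun M => by fun_prop) (fun M x => ?_) ?_
  · have h0 := avg_modeSq_nonneg hL.le (S M) x
    have h1 := avg_modeSq_le hL.le (S M) x
    simp only [hcard, Fintype.card_fin] at h0 h1
    have hc : (0 : ℝ) < 1 / L ^ d := by positivity
    exact abs_le.2 ⟨by linarith, by linarith⟩
  · refine squeeze_zero' (.of_forall fun M => integral_nonneg fun x => sq_nonneg _) ?_
      (by simpa using hcount.const_mul ((3 / 2) ^ d / L ^ d))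
    filter_upwards [eventually_ge_atTop 1] with M hM
    have hne : (S M).Nonempty := Finset.card_pos.1 (by rw [hcard]; omega)
    simpa [hcard] using integral_avg_modeSq_sub_sq_le hL hne (hpos' M)
end
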